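/- Koebe principle lower bound: if F : (α,β) → ℝ is a diffeomorphism onto its image, J = (x,y) ⊂ (α,β), and log κ_F(a,b,c,d) ≥ -P for all a<b≤c<d in [α,β], then F'(x) ≥ (e^{-P}/(1+ν(F(J),F(T)))) · |F(J)|/|J|, where T = (α,β) and ν(J,T) := |J|/dist(J,∂T). -/
import Mathlib


/-- Cross-ratio of four points. -/
noncomputable def chi (a b c d : ℝ) : ℝ := ((c - b) * (d - a)) / ((c - a) * (d - b))

/-- Distortion of the cross-ratio by a map `F`. -/
noncomputable def kappa (F : ℝ → ℝ) (a b c d : ℝ) : ℝ :=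
  chi (F a) (F b) (F c) (F d) / chi a b c d

set_option maxHeartbeats 1000000 in
/-- Koebe principle, lower bound on the derivative: if `F` is an (increasing)
diffeomorphism of `T = (α,β)` onto its image, `J = (x,y) ⊂ T`, and
`log κ_F(a,b,c,d) ≥ -P` for all `α ≤ a < b ≤ c < d ≤ β`, then
`F'(x) ≥ (e^{-P}/(1 + ν(F(J),F(T)))) · |F(J)|/|J|`, where
`ν(F(J),F(T)) = |F(J)|/dist(F(J),∂F(T))`. -/
theorem koebe_derivative_lower_bound (α β x y : ℝ) (h1 : α < x) (h2 : x < y)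
    (h3 : y < β) (F : ℝ → ℝ)
    (hdiff : ∀ t ∈ Set.Icc α β, DifferentiableAt ℝ F t)
    (hmono : StrictMonoOn F (Set.Icc α β))
    (P : ℝ) (hP : 0 ≤ P)
    (hκ : ∀ a b c d : ℝ, α ≤ a → a < b → b ≤ c → c < d → d ≤ β →
      -P ≤ Real.log (kappa F a b c d)) :
    Real.exp (-P) / (1 + (F y - F x) / min (F x - F α) (F β - F y)) *
        ((F y - F x) / (y - x)) ≤ deriv F x := by
  have hxmem : x ∈ Set.Icc α β := ⟨h1.le, by linarith⟩
  have hαmem : α ∈ Set.Icc α β := ⟨le_refl _, by linarith⟩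
  have hymem : y ∈ Set.Icc α β := ⟨by linarith, h3.le⟩
  have hβmem : β ∈ Set.Icc α β := ⟨by linarith, le_refl _⟩
  have hAx : F α < F x := hmono hαmem hxmem h1
  have hxy : F x < F y := hmono hxmem hymem h2
  have hyB : F y < F β := hmono hymem hβmem h3
  set A : ℝ := F x - F α with hA
  set D : ℝ := F y - F x with hD
  set B : ℝ := F β - F y with hB
  have hApos : 0 < A := by rw [hA]; linarith
  have hDpos : 0 < D := by rw [hD]; linarith
  have hBpos : 0 < B := by rw [hB]; linarith
  set m : ℝ := min A B with hm
  have hmpos : 0 < m := lt_min hApos hBpos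
  have hmA : m ≤ A := min_le_left _ _
  set E : ℝ := Real.exp (-P) with hE
  have hEpos : 0 < E := Real.exp_pos _
  set k : ℝ := deriv F x with hk
  have hFx : DifferentiableAt ℝ F x := hdiff x hxmem
  clear_value A D B m E k
  have hxα : (0:ℝ) < x - α := by linarith
  have hyx : (0:ℝ) < y - x := by linarith
  have hyα : (0:ℝ) < y - α := by linarith
  -- Define the two functions of h whose limits we compare
  set G : ℝ → ℝ := fun h => ((F (x + h) - F x) / h) *
      ((F y - F α) / ((F (x + h) - F α) * (F y - F x))) with hG
  set Rf : ℝ → ℝ := fun h => E * ((y - α) / ((x + h - α) * (y - x))) with hRf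
  -- Eventual inequality Rf h ≤ G h for small h > 0
  have hev : Rf ≤ᶠ[nhdsWithin (0:ℝ) (Set.Ioi 0)] G := by
    have hmem2 : Set.Ioo (0:ℝ) (y - x) ∈ nhdsWithin (0:ℝ) (Set.Ioi 0) := by
      refine mem_nhdsWithin.2 ⟨Set.Iio (y - x), isOpen_Iio, Set.mem_Iio.2 (by linarith), ?_⟩
      rintro t ⟨ht1, ht2⟩
      exact ⟨ht2, ht1⟩
    filter_upwards [hmem2] with h hh
    obtain ⟨hh0, hhy⟩ := hh
    have hxh : x + h ∈ Set.Icc α β := ⟨by linarith, by linarith⟩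
    have hxxh : F x < F (x + h) := hmono hxmem hxh (by linarith)
    have hxhy : F (x + h) < F y := hmono hxh hymem (by linarith)
    have hαxh : F α < F (x + h) := hmono hαmem hxh (by linarith)
    have hchi : chi α x (x + h) y = h * ((y - α) / ((x + h - α) * (y - x))) := by
      unfold chi
      have hxx : x + h - x = h := by ring
      rw [hxx, mul_div_assoc]
    have hchipos : 0 < chi α x (x + h) y := by
      rw [hchi]
      exact mul_pos hh0 (div_pos (by linarith) (mul_pos (by linarith) (by linarith)))
    have hchiF : chi (F α) (F x) (F (x + h)) (F y) =
        (F (x + h) - F x) * ((F y - F α) / ((F (x + h) - F α) * (F y - F x))) := by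
      unfold chi; rw [mul_div_assoc]
    have hchiFpos : 0 < chi (F α) (F x) (F (x + h)) (F y) := by
      rw [hchiF]
      exact mul_pos (by linarith)
        (div_pos (by linarith) (mul_pos (by linarith) (by linarith)))
    have hlog := hκ α x (x + h) y (le_refl _) h1 (by linarith) (by linarith) (by linarith)
    have hκpos : 0 < kappa F α x (x + h) y := div_pos hchiFpos hchipos
    have hEκ : E ≤ kappa F α x (x + h) y := by
      calc E = Real.exp (-P) := hE
        _ ≤ Real.exp (Real.log (kappa F α x (x + h) y)) := Real.exp_le_exp.2 hlog
        _ = kappa F α x (x + h) y := Real.exp_log hκpos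
    have hEchi : E * chi α x (x + h) y ≤ chi (F α) (F x) (F (x + h)) (F y) := by
      have h' := (le_div_iff₀ hchipos).1 hEκ
      simpa [kappa] using h'
    have hGh : G h = chi (F α) (F x) (F (x + h)) (F y) / h := by
      simp only [hG]
      rw [hchiF, div_mul_eq_mul_div]
    have hRfh : Rf h = E * chi α x (x + h) y / h := by
      simp only [hRf]
      rw [hchi, mul_comm h, ← mul_assoc, mul_div_assoc, div_self hh0.ne', mul_one]
    rw [hGh, hRfh]
    gcongr
  -- Limit of Rf
  have hRlim : Filter.Tendsto Rf (nhdsWithin (0:ℝ) (Set.Ioi 0))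
      (nhds (E * ((y - α) / ((x - α) * (y - x))))) := by
    apply Filter.Tendsto.mono_left _ nhdsWithin_le_nhds
    have hden : Filter.Tendsto (fun h : ℝ => (x + h - α) * (y - x)) (nhds 0)
        (nhds ((x - α) * (y - x))) :=
      Continuous.tendsto' (((continuous_const.add continuous_id).sub continuous_const).mul continuous_const) 0 _ (by simp)
    exact tendsto_const_nhds.mul
      (tendsto_const_nhds.div hden (mul_pos hxα hyx).ne')
  -- Limit of G
  have hslope : Filter.Tendsto (fun h : ℝ => (F (x + h) - F x) / h)
      (nhdsWithin (0:ℝ) (Set.Ioi 0)) (nhds k) := by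
    have hhd : HasDerivAt F k x := hk ▸ hFx.hasDerivAt
    have hs := hasDerivAt_iff_tendsto_slope.1 hhd
    have hmap : Filter.Tendsto (fun h : ℝ => x + h) (nhdsWithin (0:ℝ) (Set.Ioi 0))
        (nhdsWithin x {x}ᶜ) := by
      apply tendsto_nhdsWithin_of_tendsto_nhds_of_eventually_within
      · exact (Continuous.tendsto' (continuous_const.add continuous_id) 0 x (by simp)).mono_left nhdsWithin_le_nhds
      · filter_upwards [self_mem_nhdsWithin] with h hh
        simp only [Set.mem_compl_iff, Set.mem_singleton_iff]
        have : (0:ℝ) < h := hh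
        intro hc
        have h0 : h = 0 := by linarith [congrArg (· - x) hc]
        exact absurd h0 (ne_of_gt this)
    have hcomp := hs.comp hmap
    apply hcomp.congr
    intro h
    simp only [Function.comp_apply, slope_def_field]
    congr 1
    ring
  have hcont : Filter.Tendsto (fun h : ℝ => (F y - F α) / ((F (x + h) - F α) * (F y - F x)))
      (nhdsWithin (0:ℝ) (Set.Ioi 0)) (nhds ((F y - F α) / ((F x - F α) * (F y - F x)))) := by
    apply Filter.Tendsto.mono_left _ nhdsWithin_le_nhds
    have hFc : Filter.Tendsto (fun h : ℝ => F (x + h)) (nhds 0) (nhds (F x)) :=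
      (hFx.continuousAt.tendsto).comp (Continuous.tendsto' (continuous_const.add continuous_id) 0 x (by simp))
    have hden : Filter.Tendsto (fun h : ℝ => (F (x + h) - F α) * (F y - F x)) (nhds 0)
        (nhds ((F x - F α) * (F y - F x))) :=
      (hFc.sub tendsto_const_nhds).mul tendsto_const_nhds
    exact tendsto_const_nhds.div hden (by rw [← hA, ← hD]; exact (mul_pos hApos hDpos).ne')
  have hGlim : Filter.Tendsto G (nhdsWithin (0:ℝ) (Set.Ioi 0))
      (nhds (k * ((F y - F α) / ((F x - F α) * (F y - F x))))) := hslope.mul hcont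
  have key : E * ((y - α) / ((x - α) * (y - x))) ≤
      k * ((F y - F α) / ((F x - F α) * (F y - F x))) :=
    le_of_tendsto_of_tendsto hRlim hGlim hev
  -- Algebra
  rw [← hA, ← hD] at key
  have hFyα : F y - F α = A + D := by rw [hA, hD]; ring
  rw [hFyα] at key
  have hADpos : 0 < A + D := by linarith
  have e1 : E * ((y - α) / ((x - α) * (y - x))) = E * (y - α) / ((x - α) * (y - x)) := by
    ring
  have e2 : k * ((A + D) / (A * D)) = k * (A + D) / (A * D) := by ring
  rw [e1, e2] at key
  have key2 : E * (y - α) * (A * D) ≤ k * (A + D) * ((x - α) * (y - x)) :=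
    (div_le_div_iff₀ (mul_pos hxα hyx) (mul_pos hApos hDpos)).1 key
  -- derive goal
  have hone : (0:ℝ) < 1 + D / m := by have := div_pos hDpos hmpos; linarith
  have hmD : (0:ℝ) < m + D := by linarith
  have hgoal_eq : E / (1 + D / m) * (D / (y - x)) = E * m * D / ((m + D) * (y - x)) := by
    field_simp
  show E / (1 + D / m) * (D / (y - x)) ≤ k
  rw [hgoal_eq, div_le_iff₀ (mul_pos hmD hyx)]
  have step1 : E * (x - α) * (A * D) ≤ k * (A + D) * ((x - α) * (y - x)) := by
    nlinarith [key2, mul_le_mul_of_nonneg_right (show x - α ≤ y - α by linarith)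
      (mul_pos hEpos (mul_pos hApos hDpos)).le]
  have step2 : E * (A * D) ≤ k * (A + D) * (y - x) := by
    have h' : (x - α) * (E * (A * D)) ≤ (x - α) * (k * (A + D) * (y - x)) := by
      nlinarith [step1]
    exact le_of_mul_le_mul_left h' hxα
  have c1 : E * m * D * (A + D) ≤ E * A * D * (m + D) := by
    have hd : E * A * D * (m + D) - E * m * D * (A + D) = E * D * D * (A - m) := by ring
    have hnn : 0 ≤ E * D * D * (A - m) :=
      mul_nonneg (mul_nonneg (mul_nonneg hEpos.le hDpos.le) hDpos.le) (sub_nonneg.2 hmA)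
    linarith [hd, hnn]
  have c2 : E * A * D * (m + D) ≤ k * (A + D) * (y - x) * (m + D) :=
    mul_le_mul_of_nonneg_right (by linarith [step2]) hmD.le
  have c3 : E * m * D * (A + D) ≤ k * ((m + D) * (y - x)) * (A + D) := by
    calc E * m * D * (A + D) ≤ E * A * D * (m + D) := c1
      _ ≤ k * (A + D) * (y - x) * (m + D) := c2
      _ = k * ((m + D) * (y - x)) * (A + D) := by ring
  exact le_of_mul_le_mul_right c3 hADpos
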